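/- arXiv:math/9809079 — 4 statements merged into one kernel-verified Lean document; each statement's English description precedes it below -/
import Mathlib

section
/- Let S = {a_1, ..., a_n} be a multiset of nonnegative integers (n >= 2) with at least two of the a_i positive, and suppose S is imbalanced, i.e., if k is the largest integer such that 2^k divides every a_i, then the k-th bit of the nim-sum a_1 XOR ... XOR a_n is 1. Then there are no nonnegative integers t_1, ..., t_n with t_i >= a_i for all i such that the nim-sum of t_1, ..., t_n equals the nim-sum of (t_1 - a_1), ..., (t_n - a_n). -/
/-!
Write `tᵢ = aᵢ + (tᵢ - aᵢ)`. Since `2^k` divides `aᵢ`, adding `aᵢ` causes no carry into bit `k`,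
so bit `k` of `tᵢ` is the XOR of bit `k` of `aᵢ` and of `tᵢ - aᵢ`. XOR-ing over `i`, bit `k` of
the nim-sum of the `tᵢ` is the XOR of bit `k` of the nim-sums of the `aᵢ` and of the `tᵢ - aᵢ`;
the former is `1` by imbalance, so the nim-sums of the `tᵢ` and of the `tᵢ - aᵢ` differ.
-/

/-- The nim-sum (bitwise XOR) of a list of naturals. -/
def nimSum (l : List ℕ) : ℕ := l.foldr (· ^^^ ·) 0

theorem Nat.testBit_add_of_two_pow_dvd {x k : ℕ} (y : ℕ) (h : 2 ^ k ∣ x) :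
    (x + y).testBit k = (x.testBit k ^^ y.testBit k) := by
  obtain ⟨b, rfl⟩ := h
  conv_rhs => rw [← Nat.add_zero (2 ^ k * b), Nat.testBit_mul_two_pow_add_eq]
  simp [Nat.testBit_mul_two_pow_add_eq]

@[simp]
theorem nimSum_nil : nimSum [] = 0 := rfl

@[simp]
theorem nimSum_cons (x : ℕ) (l : List ℕ) : nimSum (x :: l) = x ^^^ nimSum l := rfl

theorem nimSum_ofFn_xor {n : ℕ} (f g : Fin n → ℕ) :
    nimSum (List.ofFn fun i => f i ^^^ g i) = nimSum (List.ofFn f) ^^^ nimSum (List.ofFn g) := by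
  induction n with
  | zero => simp
  | succ n ih =>
    simp only [List.ofFn_succ, nimSum_cons, ih]
    ac_rfl

theorem testBit_nimSum_ofFn_congr {n k : ℕ} {f g : Fin n → ℕ}
    (h : ∀ i, (f i).testBit k = (g i).testBit k) :
    (nimSum (List.ofFn f)).testBit k = (nimSum (List.ofFn g)).testBit k := by
  induction n with
  | zero => simp
  | succ n ih =>
    simp only [List.ofFn_succ, nimSum_cons, Nat.testBit_xor, h 0, ih fun i => h i.succ]

theorem stmt5_general (n : ℕ) (a : Fin n → ℕ)
    (k : ℕ) (hk : ∀ i, 2 ^ k ∣ a i)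
    (himb : (nimSum (List.ofFn a)).testBit k = true) :
    ¬ ∃ t : Fin n → ℕ, (∀ i, a i ≤ t i) ∧
      nimSum (List.ofFn t) = nimSum (List.ofFn fun i => t i - a i) := by
  rintro ⟨t, hle, heq⟩
  have hbit : ∀ i, (t i).testBit k = (a i ^^^ (t i - a i)).testBit k := fun i => by
    rw [Nat.testBit_xor, ← Nat.testBit_add_of_two_pow_dvd _ (hk i), Nat.add_sub_cancel' (hle i)]
  have hsum := testBit_nimSum_ofFn_congr hbit
  rw [nimSum_ofFn_xor, Nat.testBit_xor, himb, heq] at hsum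
  simp at hsum

theorem stmt5 (n : ℕ) (hn : 2 ≤ n) (a : Fin n → ℕ)
    (hpos : ∃ i j, i ≠ j ∧ 0 < a i ∧ 0 < a j)
    (k : ℕ) (hk : ∀ i, 2 ^ k ∣ a i) (hkmax : ¬ ∀ i, 2 ^ (k + 1) ∣ a i)
    (himb : (nimSum (List.ofFn a)).testBit k = true) :
    ¬ ∃ t : Fin n → ℕ, (∀ i, a i ≤ t i) ∧
      nimSum (List.ofFn t) = nimSum (List.ofFn fun i => t i - a i) :=
  stmt5_general n a k hk himb
end

section
/- Let S = {a_1, ..., a_n} be a multiset of nonnegative integers (n >= 2) with at least two of the a_i positive. There exist nonnegative integers t_1, ..., t_n with t_i >= a_i for all i such that nim-sum of t_1, ..., t_n equals nim-sum of (t_1 - a_1), ..., (t_n - a_n), if and only if S is balanced. -/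
def bitFn (x : ℕ) : ℕ → ZMod 2 := fun j => ((x / 2 ^ j : ℕ) : ZMod 2)

lemma bitFn_apply (x j : ℕ) : bitFn x j = if x.testBit j then 1 else 0 := by
  rw [Nat.testBit_eq_decide_div_mod_eq, bitFn, ← ZMod.natCast_mod]
  rcases Nat.mod_two_eq_zero_or_one (x / 2 ^ j) with h | h <;> simp [h]

lemma bitFn_apply_eq_zero_iff (x j : ℕ) : bitFn x j = 0 ↔ x.testBit j = false := by
  rw [bitFn_apply]
  split <;> simp_all

lemma bitFn_injective : Function.Injective bitFn := fun x y h =>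
  Nat.eq_of_testBit_eq fun j => by
    have := congrFun h j
    simp only [bitFn_apply] at this
    split_ifs at this <;> simp_all

lemma bitFn_xor (x y : ℕ) : bitFn (x ^^^ y) = bitFn x + bitFn y := by
  funext j
  simp only [Pi.add_apply, bitFn_apply, Nat.testBit_xor]
  cases x.testBit j <;> cases y.testBit j <;> decide

lemma bitFn_sub_bitFn (x y : ℕ) : bitFn x - bitFn y = bitFn (x ^^^ y) := by
  rw [bitFn_xor, CharTwo.sub_eq_add]

lemma bitFn_add_two_pow_mul (x k c : ℕ) : bitFn (x + 2 ^ k * c) k = bitFn x k + c := by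
  simp [bitFn, Nat.add_mul_div_left _ _ (Nat.two_pow_pos k)]

lemma bitFn_nimSum (l : List ℕ) : bitFn (nimSum l) = (l.map bitFn).sum := by
  induction l with
  | nil => funext j; simp [nimSum, bitFn]
  | cons x l ih => simp [nimSum, bitFn_xor, ← ih]

lemma bitFn_nimSum_ofFn {n : ℕ} (f : Fin n → ℕ) :
    bitFn (nimSum (List.ofFn f)) = ∑ i, bitFn (f i) := by
  rw [bitFn_nimSum, List.map_ofFn, List.sum_ofFn, Function.comp_def]

lemma nimSum_ofFn_eq_iff {n : ℕ} (f g : Fin n → ℕ) :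
    nimSum (List.ofFn f) = nimSum (List.ofFn g) ↔ ∑ i, bitFn (f i) = ∑ i, bitFn (g i) := by
  rw [← bitFn_injective.eq_iff, bitFn_nimSum_ofFn, bitFn_nimSum_ofFn]

lemma Nat.xor_two_pow_sub_succ {x n : ℕ} (h : x < 2 ^ n) :
    x ^^^ (2 ^ n - (x + 1)) = 2 ^ n - 1 := by
  refine Nat.eq_of_testBit_eq fun i => ?_
  rw [Nat.testBit_xor, Nat.testBit_two_pow_sub_succ h, Nat.testBit_two_pow_sub_one]
  by_cases hi : i < n
  · simp [hi]
  · have : x.testBit i = false :=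
      Nat.testBit_lt_two_pow (h.trans_le (Nat.pow_le_pow_right two_pos (not_lt.1 hi)))
    simp [hi, this]

lemma Nat.two_pow_mul_xor (k a b : ℕ) : 2 ^ k * a ^^^ 2 ^ k * b = 2 ^ k * (a ^^^ b) := by
  simp only [mul_comm (2 ^ k), ← Nat.shiftLeft_eq, Nat.shiftLeft_xor_distrib]

lemma exists_add_two_pow_mul_xor_eq {α m : ℕ} (k : ℕ) (hα : Odd α) (hm : α < 2 ^ m) :
    ∃ s, (s + 2 ^ k * α) ^^^ s = 2 ^ k * (2 ^ m - 1) := by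
  obtain ⟨c, rfl⟩ := hα
  cases m with
  | zero => simp at hm
  | succ m =>
    have h2 : 2 ^ (m + 1) = 2 * 2 ^ m := pow_succ' 2 m
    have key := Nat.xor_two_pow_sub_succ (x := 2 ^ m + c) (n := m + 1) (by omega)
    refine ⟨2 ^ k * (2 ^ m - (c + 1)), ?_⟩
    rw [← mul_add, Nat.two_pow_mul_xor, ← key]
    congr 2 <;> omega

lemma Fin.sum_succ_sub_castSucc {M : Type*} [AddCommGroup M] {n : ℕ} (g : Fin (n + 1) → M) :
    ∑ i : Fin n, (g i.succ - g i.castSucc) = g (Fin.last n) - g 0 := by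
  induction n with
  | zero => simp
  | succ n ih =>
    rw [Fin.sum_univ_castSucc]
    simp only [Fin.succ_castSucc]
    rw [ih (fun i => g i.castSucc), Fin.succ_last, Fin.castSucc_zero]
    abel

lemma exists_sum_bitFn_sub_eq {n : ℕ} (f : Fin n → ℕ) (s : ℕ) :
    ∃ t : Fin n → ℕ, (∀ i, f i ≤ t i) ∧
      ∑ i, (bitFn (t i) - bitFn (t i - f i)) = bitFn ((s + ∑ i, f i) ^^^ s) := by
  have hstep (i : Fin n) :
      s + Fin.partialSum f i.succ - f i = s + Fin.partialSum f i.castSucc := by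
    rw [Fin.partialSum_succ]; omega
  refine ⟨fun i => s + Fin.partialSum f i.succ, fun i => ?_, ?_⟩
  · dsimp only
    rw [Fin.partialSum_succ]; omega
  · simp only [hstep]
    rw [Fin.sum_succ_sub_castSucc (fun i => bitFn (s + Fin.partialSum f i)), bitFn_sub_bitFn]
    simp [Fin.partialSum, List.take_of_length_le, List.sum_ofFn]

lemma testBit_nimSum_two_pow_mul_eq_false_iff {n : ℕ} (k : ℕ) (α : Fin n → ℕ) :
    (nimSum (List.ofFn fun i => 2 ^ k * α i)).testBit k = false ↔ ∑ i, (α i : ZMod 2) = 0 := by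
  rw [← bitFn_apply_eq_zero_iff, bitFn_nimSum_ofFn, Finset.sum_apply]
  have hdigit (c : ℕ) : bitFn (2 ^ k * c) k = c := by simp [bitFn]
  simp only [hdigit]

lemma sum_cast_eq_zero_of_nimSum_eq {n k : ℕ} {α t : Fin n → ℕ} (hle : ∀ i, 2 ^ k * α i ≤ t i)
    (h : nimSum (List.ofFn t) = nimSum (List.ofFn fun i => t i - 2 ^ k * α i)) :
    ∑ i, (α i : ZMod 2) = 0 := by
  have hk := congrFun ((nimSum_ofFn_eq_iff _ _).1 h) k
  have hdigit (i : Fin n) : bitFn (t i) k = bitFn (t i - 2 ^ k * α i) k + α i := by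
    rw [← bitFn_add_two_pow_mul, Nat.sub_add_cancel (hle i)]
  simp only [Finset.sum_apply, hdigit, Finset.sum_add_distrib] at hk
  exact add_eq_left.1 hk

lemma odd_sum_erase_of_odd {ι : Type*} [Fintype ι] [DecidableEq ι] {α : ι → ℕ} {p : ι}
    (hp : Odd (α p)) (hsum : ∑ i, (α i : ZMod 2) = 0) : Odd (∑ i ∈ Finset.univ.erase p, α i) := by
  rw [← Finset.add_sum_erase _ _ (Finset.mem_univ p), ZMod.natCast_eq_one_iff_odd.2 hp, add_comm,
    ← CharTwo.sub_eq_add, sub_eq_zero] at hsum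
  rw [← ZMod.natCast_eq_one_iff_odd]
  push_cast
  exact hsum

lemma exists_nimSum_eq_of_odd {n : ℕ} (k : ℕ) (α : Fin n → ℕ) (p : Fin n) (hp : Odd (α p))
    (hbal : ∑ i, (α i : ZMod 2) = 0) :
    ∃ t : Fin n → ℕ, (∀ i, 2 ^ k * α i ≤ t i) ∧
      nimSum (List.ofFn t) = nimSum (List.ofFn fun i => t i - 2 ^ k * α i) := by
  set β := ∑ i ∈ Finset.univ.erase p, α i
  have hβ : Odd β := odd_sum_erase_of_odd hp hbal
  set f := Function.update (fun i => 2 ^ k * α i) p 0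
  have hf : ∑ i, f i = 2 ^ k * β := by
    rw [Finset.sum_update_of_mem (Finset.mem_univ p), zero_add, Finset.mul_sum,
      Finset.sdiff_singleton_eq_erase]
  set m := α p + β
  obtain ⟨sa, hsa⟩ := exists_add_two_pow_mul_xor_eq k hp
    (Nat.lt_two_pow_self.trans_le (Nat.pow_le_pow_right two_pos (Nat.le_add_right _ β)))
  obtain ⟨sb, hsb⟩ := exists_add_two_pow_mul_xor_eq k hβ
    (Nat.lt_two_pow_self.trans_le (Nat.pow_le_pow_right two_pos (Nat.le_add_left β _)))
  obtain ⟨t, hle, hsum⟩ := exists_sum_bitFn_sub_eq f sb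
  rw [hf, hsb] at hsum
  set d := 2 ^ k * (2 ^ m - 1)
  -- `f p = 0`, so entry `p` contributes nothing to the chain `t`; it gets its own value `d` instead.
  set t' := Function.update t p (sa + 2 ^ k * α p)
  have hterm (i : Fin n) : bitFn (t' i) - bitFn (t' i - 2 ^ k * α i) =
      bitFn (t i) - bitFn (t i - f i) + (Pi.single p (bitFn d) : Fin n → ℕ → ZMod 2) i := by
    rcases eq_or_ne i p with rfl | h
    · simp [t', f, bitFn_sub_bitFn, hsa]
    · simp [t', f, h]
  refine ⟨t', fun i => ?_, ?_⟩
  · rcases eq_or_ne i p with rfl | h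
    · simp [t']
    · simpa [t', f, h] using hle i
  · rw [nimSum_ofFn_eq_iff, ← sub_eq_zero, ← Finset.sum_sub_distrib]
    simp only [hterm, Finset.sum_add_distrib, hsum, Finset.sum_pi_single', Finset.mem_univ,
      if_true, CharTwo.add_self_eq_zero]

theorem stmt7_general (n : ℕ) (a : Fin n → ℕ)
    (k : ℕ) (hk : ∀ i, 2 ^ k ∣ a i) (hkmax : ¬ ∀ i, 2 ^ (k + 1) ∣ a i) :
    (∃ t : Fin n → ℕ, (∀ i, a i ≤ t i) ∧
        nimSum (List.ofFn t) = nimSum (List.ofFn fun i => t i - a i)) ↔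
      (nimSum (List.ofFn a)).testBit k = false := by
  obtain ⟨α, rfl⟩ : ∃ α : Fin n → ℕ, a = fun i => 2 ^ k * α i :=
    ⟨fun i => a i / 2 ^ k, funext fun i => (Nat.mul_div_cancel' (hk i)).symm⟩
  obtain ⟨p, hp⟩ : ∃ p, Odd (α p) := by
    simpa [pow_succ, Nat.mul_dvd_mul_iff_left, ← even_iff_two_dvd] using hkmax
  rw [testBit_nimSum_two_pow_mul_eq_false_iff]
  constructor
  · rintro ⟨t, hle, heq⟩
    exact sum_cast_eq_zero_of_nimSum_eq hle heq
  · exact exists_nimSum_eq_of_odd k α p hp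

theorem stmt7 (n : ℕ) (hn : 2 ≤ n) (a : Fin n → ℕ)
    (hpos : ∃ i j, i ≠ j ∧ 0 < a i ∧ 0 < a j)
    (k : ℕ) (hk : ∀ i, 2 ^ k ∣ a i) (hkmax : ¬ ∀ i, 2 ^ (k + 1) ∣ a i) :
    (∃ t : Fin n → ℕ, (∀ i, a i ≤ t i) ∧
        nimSum (List.ofFn t) = nimSum (List.ofFn fun i => t i - a i)) ↔
      (nimSum (List.ofFn a)).testBit k = false :=
  stmt7_general n a k hk hkmax
end

section
/- Let n be even, and let S = {a_1, ..., a_n} be a multiset of nonnegative integers with at least two a_i positive, which is balanced but not smooth, and such that bit k of a_i is 1 for every i (k as in the definition of balanced). Then there are no nonnegative integers t_1, ..., t_n with t_i >= a_i for all i such that both the nim-sum of t_1, ..., t_n and the nim-sum of (t_1 - a_1), ..., (t_n - a_n) are 0. -/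
/-- Bit `j` of `x` as an element of `ZMod 2`, so that nim-sums become ordinary sums. -/
def bitZMod2 (x j : ℕ) : ZMod 2 := ((x / 2 ^ j : ℕ) : ZMod 2)

lemma bitZMod2_eq_ite (x j : ℕ) : bitZMod2 x j = if x.testBit j then 1 else 0 := by
  rw [bitZMod2, Nat.testBit_eq_decide_div_mod_eq, ← ZMod.natCast_mod (x / 2 ^ j) 2]
  rcases Nat.mod_two_eq_zero_or_one (x / 2 ^ j) with h | h <;> simp [h]

@[simp]
lemma bitZMod2_zero (j : ℕ) : bitZMod2 0 j = 0 := by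
  simp [bitZMod2]

lemma bitZMod2_xor (x y j : ℕ) : bitZMod2 (x ^^^ y) j = bitZMod2 x j + bitZMod2 y j := by
  simp only [bitZMod2_eq_ite, Nat.testBit_xor]
  cases x.testBit j <;> cases y.testBit j <;> decide

lemma bitZMod2_nimSum (l : List ℕ) (j : ℕ) :
    bitZMod2 (nimSum l) j = (l.map (bitZMod2 · j)).sum := by
  induction l with
  | nil => simp [nimSum]
  | cons x l ih =>
    change bitZMod2 (x ^^^ nimSum l) j = _
    rw [bitZMod2_xor, ih, List.map_cons, List.sum_cons]

lemma bitZMod2_nimSum_ofFn {n : ℕ} (g : Fin n → ℕ) (j : ℕ) :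
    bitZMod2 (nimSum (List.ofFn g)) j = ∑ i, bitZMod2 (g i) j := by
  rw [bitZMod2_nimSum, List.map_ofFn, List.sum_ofFn]
  rfl

lemma bitZMod2_add_of_testBit (s a k : ℕ) (hdvd : 2 ^ k ∣ a) (hbit : a.testBit k) :
    bitZMod2 (s + a) (k + 1) = bitZMod2 s (k + 1) + bitZMod2 a (k + 1) + bitZMod2 s k := by
  have hsucc : ∀ x, x / 2 ^ (k + 1) = x / 2 ^ k / 2 := fun x => by
    rw [pow_succ, Nat.div_div_eq_div_mul]
  have hodd : a / 2 ^ k % 2 = 1 := by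
    simpa [Nat.testBit_eq_decide_div_mod_eq] using hbit
  have hcarry : (s / 2 ^ k + a / 2 ^ k) / 2 = s / 2 ^ k / 2 + a / 2 ^ k / 2 + s / 2 ^ k % 2 := by
    omega
  simp only [bitZMod2, hsucc, Nat.add_div_of_dvd_left hdvd, hcarry, Nat.cast_add,
    ZMod.natCast_mod]

theorem stmt11_general (n : ℕ) (a : Fin n → ℕ)
    (k : ℕ) (hk : ∀ i, 2 ^ k ∣ a i)
    (hbal : (nimSum (List.ofFn a)).testBit k = false)
    (hnotsmooth : ¬ ((nimSum (List.ofFn a)).testBit k = false ∧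
        (nimSum (List.ofFn a)).testBit (k + 1) = false))
    (hbits : ∀ i, (a i).testBit k = true) :
    ¬ ∃ t : Fin n → ℕ, (∀ i, a i ≤ t i) ∧
      nimSum (List.ofFn t) = 0 ∧
      nimSum (List.ofFn fun i => t i - a i) = 0 := by
  rintro ⟨t, hle, ht, hs⟩
  have hsigma : (nimSum (List.ofFn a)).testBit (k + 1) = true := by
    simpa [hbal] using hnotsmooth
  have hcarry : ∀ i, bitZMod2 (t i) (k + 1) =
      bitZMod2 (t i - a i) (k + 1) + bitZMod2 (a i) (k + 1) + bitZMod2 (t i - a i) k := fun i => by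
    simpa only [Nat.sub_add_cancel (hle i)] using
      bitZMod2_add_of_testBit (t i - a i) (a i) k (hk i) (hbits i)
  have : (0 : ZMod 2) = 1 :=
    calc (0 : ZMod 2) = bitZMod2 (nimSum (List.ofFn t)) (k + 1) := by rw [ht, bitZMod2_zero]
      _ = ∑ i, (bitZMod2 (t i - a i) (k + 1) + bitZMod2 (a i) (k + 1) +
            bitZMod2 (t i - a i) k) := by
          rw [bitZMod2_nimSum_ofFn]
          exact Finset.sum_congr rfl fun i _ => hcarry i
      _ = bitZMod2 (nimSum (List.ofFn fun i => t i - a i)) (k + 1) +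
            bitZMod2 (nimSum (List.ofFn a)) (k + 1) +
            bitZMod2 (nimSum (List.ofFn fun i => t i - a i)) k := by
          simp only [bitZMod2_nimSum_ofFn, Finset.sum_add_distrib]
      _ = 1 := by simp [hs, bitZMod2_eq_ite, hsigma]
  exact zero_ne_one this

theorem stmt11 (n : ℕ) (heven : Even n) (a : Fin n → ℕ)
    (hpos : ∃ i j, i ≠ j ∧ 0 < a i ∧ 0 < a j)
    (k : ℕ) (hk : ∀ i, 2 ^ k ∣ a i) (hkmax : ¬ ∀ i, 2 ^ (k + 1) ∣ a i)
    (hbal : (nimSum (List.ofFn a)).testBit k = false)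
    (hnotsmooth : ¬ ((nimSum (List.ofFn a)).testBit k = false ∧
        (nimSum (List.ofFn a)).testBit (k + 1) = false))
    (hbits : ∀ i, (a i).testBit k = true) :
    ¬ ∃ t : Fin n → ℕ, (∀ i, a i ≤ t i) ∧
      nimSum (List.ofFn t) = 0 ∧
      nimSum (List.ofFn fun i => t i - a i) = 0 :=
  stmt11_general n a k hk hbal hnotsmooth hbits
end

section
/- Let n be even with n >= 2, S = {a_1, ..., a_n} balanced with at least two a_i positive, and suppose there exists i such that bit k of a_i is 0, where k is the maximum integer with 2^k dividing every a_j. Then there exist nonnegative integers t_1, ..., t_n with t_i >= a_i for all i such that the nim-sum of t_1, ..., t_n is 0 and the nim-sum of (t_1 - a_1), ..., (t_n - a_n) is 0. -/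
open Finset

theorem nimSum_mod_two (l : List ℕ) : nimSum l % 2 = l.sum % 2 := by
  induction l with
  | nil => rfl
  | cons x l ih =>
    simp only [nimSum, List.foldr_cons, List.sum_cons] at ih ⊢
    rw [Nat.xor_mod_two_eq, Nat.add_mod, ih, ← Nat.add_mod]

theorem nimSum_map_div_two (l : List ℕ) : nimSum (l.map (· / 2)) = nimSum l / 2 := by
  induction l with
  | nil => rfl
  | cons x l ih =>
    simp only [nimSum, List.map_cons, List.foldr_cons] at ih ⊢
    rw [ih, Nat.xor_div_two]

theorem nimSum_map_two_pow_mul (k : ℕ) (l : List ℕ) :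
    nimSum (l.map (2 ^ k * ·)) = 2 ^ k * nimSum l := by
  induction l with
  | nil => simp [nimSum]
  | cons x l ih =>
    simp only [nimSum, List.map_cons, List.foldr_cons] at ih ⊢
    rw [ih, Nat.mul_comm (2 ^ k), Nat.mul_comm (2 ^ k), Nat.mul_comm (2 ^ k),
      ← Nat.shiftLeft_eq, ← Nat.shiftLeft_eq, ← Nat.shiftLeft_eq, Nat.shiftLeft_xor_distrib]

theorem nimSum_eq_zero_iff (l : List ℕ) :
    nimSum l = 0 ↔ Even l.sum ∧ nimSum (l.map (· / 2)) = 0 := by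
  rw [nimSum_map_div_two, Nat.even_iff, ← nimSum_mod_two]
  omega

theorem nimSum_ofFn_eq_zero_iff {n : ℕ} (f : Fin n → ℕ) :
    nimSum (List.ofFn f) = 0 ↔ Even (∑ i, f i) ∧ nimSum (List.ofFn fun i => f i / 2) = 0 := by
  simpa [List.map_ofFn, Function.comp_def, List.sum_ofFn] using nimSum_eq_zero_iff (List.ofFn f)

theorem nimSum_ofFn_two_pow_mul {n : ℕ} (k : ℕ) (f : Fin n → ℕ) :
    nimSum (List.ofFn fun i => 2 ^ k * f i) = 2 ^ k * nimSum (List.ofFn f) := by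
  simpa [List.map_ofFn, Function.comp_def] using nimSum_map_two_pow_mul k (List.ofFn f)

theorem nimSum_ofFn_zero (n : ℕ) : nimSum (List.ofFn fun _ : Fin n => 0) = 0 := by
  induction n with
  | zero => rfl
  | succ n ih => simpa [List.ofFn_succ, nimSum] using ih

section

variable {n : ℕ}

def HasNimZeroIncrement (v : Fin n → ℕ) : Prop :=
  ∃ d : Fin n → ℕ, nimSum (List.ofFn d) = 0 ∧ nimSum (List.ofFn (v + d)) = 0

theorem hasNimZeroIncrement_of_le_one {v : Fin n → ℕ} (hv : ∀ i, v i ≤ 1)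
    (hsum : Even (∑ i, v i)) : HasNimZeroIncrement v := by
  have hv0 : nimSum (List.ofFn v) = 0 := by
    rw [nimSum_ofFn_eq_zero_iff]
    refine ⟨hsum, ?_⟩
    convert nimSum_ofFn_zero n using 3
    funext i
    exact Nat.div_eq_of_lt (Nat.lt_succ_of_le (hv i))
  refine ⟨v, hv0, ?_⟩
  rw [nimSum_ofFn_eq_zero_iff]
  refine ⟨?_, ?_⟩
  · simpa only [Pi.add_apply, sum_add_distrib] using hsum.add hsum
  · convert hv0 using 3
    funext i
    simp only [Pi.add_apply]
    omega

theorem HasNimZeroIncrement.of_half {v δ : Fin n → ℕ} (hv : Even (∑ i, v i))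
    (hδ : ∀ i, δ i ≤ 1) (hδsum : Even (∑ i, δ i))
    (h : HasNimZeroIncrement fun i => (v i + δ i) / 2) : HasNimZeroIncrement v := by
  obtain ⟨d, hd, hvd⟩ := h
  have hsum : Even (∑ i, (δ i + 2 * d i)) := by
    rw [sum_add_distrib, ← mul_sum]
    exact hδsum.add (even_two_mul _)
  refine ⟨fun i => δ i + 2 * d i, ?_, ?_⟩
  · rw [nimSum_ofFn_eq_zero_iff]
    refine ⟨hsum, ?_⟩
    convert hd using 3
    funext i
    have := hδ i
    omega
  · rw [nimSum_ofFn_eq_zero_iff]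
    refine ⟨by simpa only [Pi.add_apply, sum_add_distrib] using hv.add hsum, ?_⟩
    convert hvd using 3
    funext i
    simp only [Pi.add_apply]
    omega

theorem HasNimZeroIncrement.of_half_of_even {v δ : Fin n → ℕ} (hv : Even (∑ i, v i))
    (hδ : ∀ i, δ i ≤ 1) {j : Fin n} (hj : Even (v j))
    (h : HasNimZeroIncrement fun i => (v i + δ i) / 2) : HasNimZeroIncrement v := by
  by_cases hδsum : Even (∑ i, δ i)
  · exact h.of_half hv hδ hδsum
  -- Toggling `δ j` flips the parity of `∑ δ` without changing the halves, as `v j` is even.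
  set δ' := Function.update δ j (1 - δ j)
  have hδ' : ∀ i, δ' i ≤ 1 := by
    intro i
    rcases eq_or_ne i j with rfl | hij
    · simp [δ']
    · simpa [δ', hij] using hδ i
  have hhalf : (fun i => (v i + δ' i) / 2) = fun i => (v i + δ i) / 2 := by
    funext i
    rcases eq_or_ne i j with rfl | hij
    · have := hδ i
      have := Nat.even_iff.mp hj
      simp only [δ', Function.update_self]
      omega
    · simp [δ', hij]
  have hδ'sum : Even (∑ i, δ' i) := by
    rw [← add_sum_erase univ δ (mem_univ j), Nat.even_iff] at hδsum
    rw [sum_update_of_mem (mem_univ j), sdiff_singleton_eq_erase, Nat.even_iff]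
    have := hδ j
    omega
  exact (hhalf ▸ h).of_half hv hδ' hδ'sum

theorem exists_even_card_between {α : Type*} [DecidableEq α] {F A : Finset α}
    (hFA : Disjoint F A) {n : ℕ} (hn : Even n) (hA : 2 ≤ #A) (hAn : #A + 2 ≤ n)
    (hFAn : #F + #A ≤ n) :
    ∃ T, F ⊆ T ∧ T ⊆ F ∪ A ∧ Even #T ∧ 2 ≤ #T ∧ #T + 2 ≤ n := by
  obtain ⟨S, hSA, hS⟩ := exists_subset_card_eq
    (show (if #F ≤ 1 then 2 - #F else #F % 2) ≤ #A by split_ifs <;> omega)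
  refine ⟨F ∪ S, subset_union_left, union_subset_union_right hSA, ?_⟩
  rw [card_union_of_disjoint (hFA.mono_right hSA), hS, Nat.even_iff]
  rw [Nat.even_iff] at hn
  split_ifs <;> omega

theorem exists_card_odd_half_add {v : Fin n → ℕ} (hn : Even n) (hA : 2 ≤ #{i | Odd (v i)})
    (hAn : #{i | Odd (v i)} + 2 ≤ n) :
    ∃ δ : Fin n → ℕ, (∀ i, δ i ≤ 1) ∧
      Even #{i | Odd ((v i + δ i) / 2)} ∧ 2 ≤ #{i | Odd ((v i + δ i) / 2)} ∧
      #{i | Odd ((v i + δ i) / 2)} + 2 ≤ n := by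
  set F : Finset (Fin n) := {i | Even (v i) ∧ Odd (v i / 2)}
  set A : Finset (Fin n) := {i | Odd (v i)}
  have hFA : Disjoint F A := by
    rw [disjoint_filter]
    exact fun i _ h => Nat.not_odd_iff_even.mpr h.1
  have hFAn : #F + #A ≤ n := by
    simpa [← card_union_of_disjoint hFA] using card_le_univ (F ∪ A)
  obtain ⟨T, hFT, hTFA, hT⟩ := exists_even_card_between hFA hn hA hAn hFAn
  let δ : Fin n → ℕ := fun i => if Odd (v i) ∧ (Odd (v i / 2) ↔ i ∉ T) then 1 else 0
  have hhalf : ∀ i, Odd ((v i + δ i) / 2) ↔ i ∈ T := by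
    intro i
    have hF : Even (v i) ∧ Odd (v i / 2) → i ∈ T := fun h => hFT (by simpa [F] using h)
    have hTA : i ∈ T → (Even (v i) ∧ Odd (v i / 2)) ∨ Odd (v i) := fun h => by
      simpa [F, A] using hTFA h
    simp only [δ, Nat.odd_iff, Nat.even_iff] at hF hTA ⊢
    by_cases hiT : i ∈ T <;> split_ifs <;> simp_all <;> omega
  refine ⟨δ, fun i => by simp only [δ]; split_ifs <;> omega, ?_⟩
  rwa [show ({i | Odd ((v i + δ i) / 2)} : Finset (Fin n)) = T by ext i; simp [hhalf]]

theorem hasNimZeroIncrement_of_card_odd (hn : Even n) {v : Fin n → ℕ}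
    (hpar : Even #{i | Odd (v i)}) (hA : 2 ≤ #{i | Odd (v i)})
    (hAn : #{i | Odd (v i)} + 2 ≤ n) : HasNimZeroIncrement v := by
  obtain ⟨N, hN⟩ : ∃ N, ∀ i, v i ≤ N := ⟨∑ i, v i, fun i => single_le_sum (by simp) (mem_univ i)⟩
  induction N using Nat.strong_induction_on generalizing v with
  | _ N ih =>
    have hv := (even_sum_iff_even_card_odd v).mpr hpar
    by_cases hle : ∀ i, v i ≤ 1
    · exact hasNimZeroIncrement_of_le_one hle hv
    obtain ⟨j, hj⟩ : ∃ j, Even (v j) := by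
      by_contra! hall
      have : #{i | Odd (v i)} = n := by simp [Nat.not_even_iff_odd.mp (hall _)]
      omega
    obtain ⟨δ, hδ, hpar', hA', hAn'⟩ := exists_card_odd_half_add hn hA hAn
    obtain ⟨i₀, hi₀⟩ := not_forall.mp hle
    have hN₀ := hN i₀
    refine (ih (N - 1) (by omega) hpar' hA' hAn' fun i => ?_).of_half_of_even hv hδ hj
    have := hN i
    have := hδ i
    omega

end

theorem stmt14_general (n : ℕ) (heven : Even n) (a : Fin n → ℕ)
    (k : ℕ) (hk : ∀ i, 2 ^ k ∣ a i) (hkmax : ¬ ∀ i, 2 ^ (k + 1) ∣ a i)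
    (hbal : (nimSum (List.ofFn a)).testBit k = false)
    (hzero : ∃ i, (a i).testBit k = false) :
    ∃ t : Fin n → ℕ, (∀ i, a i ≤ t i) ∧
      nimSum (List.ofFn t) = 0 ∧
      nimSum (List.ofFn fun i => t i - a i) = 0 := by
  choose b hb using hk
  obtain rfl : a = fun i => 2 ^ k * b i := funext hb
  simp only [nimSum_ofFn_two_pow_mul, Nat.testBit_two_pow_mul, le_refl, decide_true,
    Nat.sub_self, Nat.testBit_zero, Bool.true_and, decide_eq_false_iff_not] at hbal hzero
  have hpar : Even #{i | Odd (b i)} := by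
    rw [← even_sum_iff_even_card_odd, Nat.even_iff, ← List.sum_ofFn, ← nimSum_mod_two]
    omega
  obtain ⟨i₁, hi₁⟩ : ∃ i, Odd (b i) := by
    by_contra! hall
    exact hkmax fun i => by
      simpa [pow_succ] using Nat.mul_dvd_mul_left (2 ^ k) (Nat.not_odd_iff_even.mp (hall i)).two_dvd
  obtain ⟨i₀, hi₀⟩ := hzero
  have hpos : 0 < #{i | Odd (b i)} := card_pos.mpr ⟨i₁, by simpa using hi₁⟩
  have hlt : #{i | Odd (b i)} < n := by
    simpa using card_lt_univ_of_notMem (x := i₀) (by simpa [Nat.odd_iff] using hi₀)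
  have := Nat.even_iff.mp heven
  have := Nat.even_iff.mp hpar
  obtain ⟨d, hd, hbd⟩ := hasNimZeroIncrement_of_card_odd heven hpar (by omega) (by omega)
  refine ⟨fun i => 2 ^ k * (b i + d i), fun i => Nat.mul_le_mul_left _ (Nat.le_add_right _ _),
    ?_, ?_⟩
  · rw [nimSum_ofFn_two_pow_mul, ← Pi.add_def, hbd, mul_zero]
  · simp only [Nat.mul_add, Nat.add_sub_cancel_left, nimSum_ofFn_two_pow_mul, hd, mul_zero]

theorem stmt14 (n : ℕ) (heven : Even n) (hn : 2 ≤ n) (a : Fin n → ℕ)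
    (hpos : ∃ i j, i ≠ j ∧ 0 < a i ∧ 0 < a j)
    (k : ℕ) (hk : ∀ i, 2 ^ k ∣ a i) (hkmax : ¬ ∀ i, 2 ^ (k + 1) ∣ a i)
    (hbal : (nimSum (List.ofFn a)).testBit k = false)
    (hzero : ∃ i, (a i).testBit k = false) :
    ∃ t : Fin n → ℕ, (∀ i, a i ≤ t i) ∧
      nimSum (List.ofFn t) = 0 ∧
      nimSum (List.ofFn fun i => t i - a i) = 0 :=
  stmt14_general n heven a k hk hkmax hbal hzero
end
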